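/- Let P₁, P₂, P₃ be elements of a complex Banach algebra and define W(τ) = exp(τP₁)·∫₀^τ exp(ηP₂)·[P₂,P₃]·exp(−ηP₂) dη − (∫₀^τ exp(ηP₁)·[P₂,P₃]·exp(−ηP₁) dη)·exp(τP₁). Then for every real τ ≥ 0, W(τ) = ∫₀^τ exp((τ−η)P₁)·(∫₀^η exp(ξP₁)·[P₁,[P₂,P₃]]·exp(−ξP₁) dξ)·exp(ηP₁) dη + ∫₀^τ exp(τP₁)·(∫₀^η exp(ξP₂)·[P₂,[P₂,P₃]]·exp(−ξP₂) dξ) dη. -/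

import Mathlib

open NormedSpace intervalIntegral

/-! By the fundamental theorem of calculus, `t ↦ exp(tX) C exp(-tX)` has derivative
`exp(tX) [X, C] exp(-tX)`, so every inner integral equals `exp(ηX) C exp(-ηX) - C`. The first outer
integrand then collapses to `exp(τP₁) C - exp((τ-η)P₁) C exp(ηP₁)`, and the substitution `η ↦ τ - η`
turns the integral of its second term into `(∫₀^τ exp(ηP₁) C exp(-ηP₁) dη) exp(τP₁)`. The constant
terms `± τ exp(τP₁) C` of the two outer integrals cancel. -/

section
variable {𝔸 : Type*} [NormedRing 𝔸] [NormedAlgebra ℝ 𝔸] [CompleteSpace 𝔸]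

theorem exp_add_smul (X : 𝔸) (s t : ℝ) : exp ((s + t) • X) = exp (s • X) * exp (t • X) := by
  rw [add_smul]
  exact exp_add_of_commute_of_mem_ball (𝕂 := ℝ) (((Commute.refl X).smul_left s).smul_right t)
    (by simp [expSeries_radius_eq_top]) (by simp [expSeries_radius_eq_top])

theorem exp_neg_smul_mul_exp_smul (X : 𝔸) (t : ℝ) : exp (-(t • X)) * exp (t • X) = 1 := by
  rw [← neg_smul, ← exp_add_smul, neg_add_cancel, zero_smul, exp_zero]

theorem hasDerivAt_exp_smul_mul_mul_exp_neg_smul (X C : 𝔸) (t : ℝ) :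
    HasDerivAt (fun s : ℝ => exp (s • X) * C * exp (-(s • X)))
      (exp (t • X) * (X * C - C * X) * exp (-(t • X))) t := by
  have hneg : HasDerivAt (fun s : ℝ => exp (-(s • X))) (-X * exp (-(t • X))) t := by
    simpa only [smul_neg] using hasDerivAt_exp_smul_const' (-X) t
  refine (((hasDerivAt_exp_smul_const X t).mul_const C).mul hneg).congr_deriv ?_
  noncomm_ring

theorem continuous_exp_smul_mul_mul_exp_neg_smul (X C : 𝔸) :
    Continuous fun t : ℝ => exp (t • X) * C * exp (-(t • X)) :=
  continuous_iff_continuousAt.2 fun t =>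
    (hasDerivAt_exp_smul_mul_mul_exp_neg_smul X C t).continuousAt

theorem integral_exp_smul_mul_commutator_mul_exp_neg_smul (X C : 𝔸) (a : ℝ) :
    ∫ t in (0 : ℝ)..a, exp (t • X) * (X * C - C * X) * exp (-(t • X))
      = exp (a • X) * C * exp (-(a • X)) - C := by
  rw [integral_eq_sub_of_hasDerivAt (fun t _ => hasDerivAt_exp_smul_mul_mul_exp_neg_smul X C t)
    ((continuous_exp_smul_mul_mul_exp_neg_smul X _).intervalIntegrable 0 a)]
  simp

theorem intervalIntegral.integral_const_mul_of_intervalIntegrable {f : ℝ → 𝔸} {a b : ℝ}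
    (hf : IntervalIntegrable f MeasureTheory.volume a b) (c : 𝔸) :
    ∫ t in a..b, c * f t = c * ∫ t in a..b, f t :=
  (ContinuousLinearMap.mul ℝ 𝔸 c).intervalIntegral_comp_comm hf

theorem intervalIntegral.integral_mul_const_of_intervalIntegrable {f : ℝ → 𝔸} {a b : ℝ}
    (hf : IntervalIntegrable f MeasureTheory.volume a b) (c : 𝔸) :
    ∫ t in a..b, f t * c = (∫ t in a..b, f t) * c :=
  ((ContinuousLinearMap.mul ℝ 𝔸).flip c).intervalIntegral_comp_comm hf

theorem integral_exp_smul_mul_mul_exp_neg_smul_sub (X C : 𝔸) (a : ℝ) :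
    ∫ t in (0 : ℝ)..a, (exp (t • X) * C * exp (-(t • X)) - C)
      = (∫ t in (0 : ℝ)..a, exp (t • X) * C * exp (-(t • X))) - a • C := by
  rw [integral_sub ((continuous_exp_smul_mul_mul_exp_neg_smul X C).intervalIntegrable 0 a)
    intervalIntegrable_const, integral_const, sub_zero]

theorem integral_exp_sub_smul_mul_mul_exp_smul (X C : 𝔸) (a : ℝ) :
    ∫ t in (0 : ℝ)..a, exp ((a - t) • X) * C * exp (t • X)
      = (∫ t in (0 : ℝ)..a, exp (t • X) * C * exp (-(t • X))) * exp (a • X) := by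
  have hshift (t : ℝ) : exp ((a - t) • X) * C * exp (t • X)
      = exp ((a - t) • X) * C * exp (-((a - t) • X)) * exp (a • X) := by
    rw [mul_assoc _ (exp _), ← neg_smul, ← exp_add_smul, neg_sub, sub_add_cancel]
  simp only [hshift]
  rw [integral_comp_sub_left (fun s => exp (s • X) * C * exp (-(s • X)) * exp (a • X)) a,
    sub_self, sub_zero, integral_mul_const_of_intervalIntegrable
      ((continuous_exp_smul_mul_mul_exp_neg_smul X C).intervalIntegrable 0 a)]

theorem integral_exp_sub_smul_mul_conj_sub_mul_exp_smul (X C : 𝔸) (a : ℝ) :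
    ∫ t in (0 : ℝ)..a, exp ((a - t) • X) * (exp (t • X) * C * exp (-(t • X)) - C) * exp (t • X)
      = a • (exp (a • X) * C)
        - (∫ t in (0 : ℝ)..a, exp (t • X) * C * exp (-(t • X))) * exp (a • X) := by
  have hcollapse (t : ℝ) :
      exp ((a - t) • X) * (exp (t • X) * C * exp (-(t • X)) - C) * exp (t • X)
        = exp (a • X) * C - exp ((a - t) • X) * C * exp (t • X) := by
    simp only [mul_sub, sub_mul, mul_assoc, exp_neg_smul_mul_exp_smul, mul_one]
    rw [← mul_assoc, ← exp_add_smul, sub_add_cancel]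
  have hint : Continuous fun t : ℝ => exp ((a - t) • X) * C * exp (t • X) := by
    have hexp := (differentiable_exp_smul_const ℝ X).continuous
    exact ((hexp.comp (continuous_const.sub continuous_id)).mul continuous_const).mul hexp
  simp only [hcollapse]
  rw [integral_sub intervalIntegrable_const (hint.intervalIntegrable 0 a), integral_const,
    sub_zero, integral_exp_sub_smul_mul_mul_exp_smul]

end

/-- For `P₁, P₂, P₃` in a complex Banach algebra and
`W(τ) = exp(τP₁)·∫₀^τ exp(ηP₂)[P₂,P₃]exp(−ηP₂) dη
       − (∫₀^τ exp(ηP₁)[P₂,P₃]exp(−ηP₁) dη)·exp(τP₁)`,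
for every `τ ≥ 0`:
`W(τ) = ∫₀^τ exp((τ−η)P₁)·(∫₀^η exp(ξP₁)[P₁,[P₂,P₃]]exp(−ξP₁) dξ)·exp(ηP₁) dη
      + ∫₀^τ exp(τP₁)·(∫₀^η exp(ξP₂)[P₂,[P₂,P₃]]exp(−ξP₂) dξ) dη`. -/
theorem W_integral_formula {𝒜 : Type*} [NormedRing 𝒜] [NormedAlgebra ℂ 𝒜]
    [CompleteSpace 𝒜] (P₁ P₂ P₃ : 𝒜) :
    ∀ τ : ℝ, 0 ≤ τ →
      exp ((τ : ℂ) • P₁)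
          * (∫ η in (0 : ℝ)..τ, exp ((η : ℂ) • P₂) * (P₂ * P₃ - P₃ * P₂)
              * exp (-((η : ℂ) • P₂)))
        - (∫ η in (0 : ℝ)..τ, exp ((η : ℂ) • P₁) * (P₂ * P₃ - P₃ * P₂)
              * exp (-((η : ℂ) • P₁)))
            * exp ((τ : ℂ) • P₁)
      = (∫ η in (0 : ℝ)..τ, exp (((τ - η : ℝ) : ℂ) • P₁)
            * (∫ ξ in (0 : ℝ)..η, exp ((ξ : ℂ) • P₁)
                * (P₁ * (P₂ * P₃ - P₃ * P₂) - (P₂ * P₃ - P₃ * P₂) * P₁)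
                * exp (-((ξ : ℂ) • P₁)))
            * exp ((η : ℂ) • P₁))
        + ∫ η in (0 : ℝ)..τ, exp ((τ : ℂ) • P₁)
            * ∫ ξ in (0 : ℝ)..η, exp ((ξ : ℂ) • P₂)
                * (P₂ * (P₂ * P₃ - P₃ * P₂) - (P₂ * P₃ - P₃ * P₂) * P₂)
                * exp (-((ξ : ℂ) • P₂)) := by
  intro τ _
  set C := P₂ * P₃ - P₃ * P₂
  simp only [Complex.coe_smul, integral_exp_smul_mul_commutator_mul_exp_neg_smul]
  rw [integral_exp_sub_smul_mul_conj_sub_mul_exp_smul,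
    integral_const_mul_of_intervalIntegrable
      (f := fun η => exp (η • P₂) * C * exp (-(η • P₂)) - C)
      (((continuous_exp_smul_mul_mul_exp_neg_smul P₂ C).sub continuous_const).intervalIntegrable
        0 τ),
    integral_exp_smul_mul_mul_exp_neg_smul_sub, mul_sub _ _ (τ • C), mul_smul_comm]
  abel
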